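/- Let C be a nonempty closed convex subset of ℝⁿ, f : ℝⁿ × ℝⁿ → ℝ, x ∈ C, z ∈ ℝⁿ, and z* ∈ C with f(z, z*) ≤ 0 < f(z, x). Let g ∈ ∂*₂f(z, x), σ > 0, and let x⁺ be the metric projection of x − σg onto C. Then ‖x⁺ − z*‖² ≤ ‖x − z*‖² + σ²‖g‖²; in particular, if ‖g‖ = 1 then ‖x⁺ − z*‖² ≤ ‖x − z*‖² + σ². -/
import Mathlib


open Filter Topology RealInnerProductSpace

/-- The star-subdifferential (normal subdifferential) of `u ↦ f z u` at `x`. -/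
def starSubdiff2 {n : ℕ} (f : EuclideanSpace ℝ (Fin n) → EuclideanSpace ℝ (Fin n) → ℝ)
    (z x : EuclideanSpace ℝ (Fin n)) : Set (EuclideanSpace ℝ (Fin n)) :=
  {g | ∀ u, f z u < f z x → ⟪g, u - x⟫ < 0}

theorem fejer_step_estimate {n : ℕ}
    (C : Set (EuclideanSpace ℝ (Fin n)))
    (hCne : C.Nonempty) (hCcl : IsClosed C) (hCcv : Convex ℝ C)
    (f : EuclideanSpace ℝ (Fin n) → EuclideanSpace ℝ (Fin n) → ℝ)
    (x : EuclideanSpace ℝ (Fin n)) (hx : x ∈ C)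
    (z : EuclideanSpace ℝ (Fin n))
    (zstar : EuclideanSpace ℝ (Fin n)) (hzstar : zstar ∈ C)
    (hval : f z zstar ≤ 0 ∧ 0 < f z x)
    (g : EuclideanSpace ℝ (Fin n)) (hg : g ∈ starSubdiff2 f z x)
    (σ : ℝ) (hσ : 0 < σ)
    (xplus : EuclideanSpace ℝ (Fin n))
    -- xplus is the metric projection of x − σg onto C
    (hproj : xplus ∈ C ∧ ∀ u ∈ C, ⟪(x - σ • g) - xplus, u - xplus⟫ ≤ 0) :
    ‖xplus - zstar‖ ^ 2 ≤ ‖x - zstar‖ ^ 2 + σ ^ 2 * ‖g‖ ^ 2 ∧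
      (‖g‖ = 1 → ‖xplus - zstar‖ ^ 2 ≤ ‖x - zstar‖ ^ 2 + σ ^ 2) := by
  set w := x - σ • g with hw
  -- projection reduces distance to points of C
  have hvar : ⟪w - xplus, zstar - xplus⟫ ≤ 0 := hproj.2 zstar hzstar
  have h1 : ‖xplus - zstar‖ ^ 2 ≤ ‖w - zstar‖ ^ 2 := by
    have hdecomp : w - zstar = (w - xplus) + (xplus - zstar) := by abel
    have := norm_add_sq_real (w - xplus) (xplus - zstar)
    have hip : ⟪w - xplus, xplus - zstar⟫ = -⟪w - xplus, zstar - xplus⟫ := by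
      rw [← inner_neg_right]; congr 1; abel
    nlinarith [sq_nonneg ‖w - xplus‖, hvar, this, hdecomp ▸ this]
  -- inner product sign from star-subdifferential
  have hlt : f z zstar < f z x := lt_of_le_of_lt hval.1 hval.2
  have hgz : ⟪g, zstar - x⟫ < 0 := hg zstar hlt
  -- expand ‖w - zstar‖²
  have hdecomp2 : w - zstar = (x - zstar) + (-(σ • g)) := by rw [hw]; abel
  have hexp := norm_add_sq_real (x - zstar) (-(σ • g))
  have hip2 : ⟪x - zstar, -(σ • g)⟫ = σ * ⟪g, zstar - x⟫ := by
    have h1 : ⟪g, zstar - x⟫ = -⟪g, x - zstar⟫ := by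
      rw [← inner_neg_right]; congr 1; abel
    rw [inner_neg_right, real_inner_smul_right, real_inner_comm, h1]; ring
  have hnorm : ‖-(σ • g)‖ ^ 2 = σ ^ 2 * ‖g‖ ^ 2 := by
    rw [norm_neg, norm_smul, Real.norm_eq_abs, mul_pow, sq_abs]
  have h2 : ‖w - zstar‖ ^ 2 ≤ ‖x - zstar‖ ^ 2 + σ ^ 2 * ‖g‖ ^ 2 := by
    rw [hdecomp2]
    nlinarith [hexp, hip2, hnorm, mul_pos hσ (neg_pos.mpr hgz)]
  refine ⟨h1.trans h2, fun hgn => ?_⟩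
  have := h1.trans h2
  rw [hgn] at this
  simpa using this
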